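/- For every s > 3 there exists a constant C₂ > 0, depending only on s, such that for every C > 0 and every divergence-free Fourier coefficient sequence u : ℤ³ → ℂ³ with u_0 = 0 and |u_k| ≤ C/|k|^s for all k ≠ 0, the series defining N_k(u) converges absolutely and |N_k(u)| ≤ C₂ C² / |k|^{s−1} for every k ∈ ℤ³ \ {0}. -/

import Mathlib

/-!
Bounding `‖Π_k‖ ≤ 1` and `|(u_{k₁}·k)| ≤ |k| |u_{k₁}|`, the `k₁`-th term of `N_k(u)` is at most
`C² |k| w(k₁) w(k - k₁)` with `w(m) = |m|^{-s}`. One of `|k₁|`, `|k - k₁|` is at least `|k|/2`, so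
`w(k₁) w(k - k₁) ≤ 2^s |k|^{-s} (w(k₁) + w(k - k₁))`; and `w` is summable over the lattice `ℤ^d`
once `s > d`. Hence the series converges absolutely, with sum at most `2^{s+1} C² |k|^{1-s} ∑ w`.
-/

noncomputable section

open scoped BigOperators

/-- Euclidean norm of an integer vector `k ∈ ℤ^d ⊂ ℝ^d`. -/
def znorm {d : ℕ} (k : Fin d → ℤ) : ℝ := Real.sqrt (∑ i, ((k i : ℝ))^2)

/-- The bilinear pairing `(a·k) = Σ_j a_j k_j` of a complex vector with an integer vector. -/
def dotZ {d : ℕ} (a : EuclideanSpace ℂ (Fin d)) (k : Fin d → ℤ) : ℂ := ∑ j, a j * (k j : ℂ)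

/-- Orthogonal projection `Π_k` onto the orthogonal complement of the (real) vector `k`. -/
def projP {d : ℕ} (k : Fin d → ℤ) (v : EuclideanSpace ℂ (Fin d)) : EuclideanSpace ℂ (Fin d) :=
  WithLp.toLp 2 (fun j => v j - (dotZ v k / ((∑ i, ((k i : ℝ))^2 : ℝ) : ℂ)) * (k j : ℂ))

/-- The `k1`-th term of the Navier–Stokes nonlinearity
`N_k(u) = -i Σ_{k1 ≠ 0} (u_{k1}·k) Π_k u_{k-k1}`. -/
def Nterm {d : ℕ} (u : (Fin d → ℤ) → EuclideanSpace ℂ (Fin d)) (k k1 : Fin d → ℤ) :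
    EuclideanSpace ℂ (Fin d) :=
  if k1 = 0 then 0 else (-Complex.I * dotZ (u k1) k) • projP k (u (k - k1))

/-- The Navier–Stokes nonlinearity `N_k(u)`. -/
def Nfun {d : ℕ} (u : (Fin d → ℤ) → EuclideanSpace ℂ (Fin d)) (k : Fin d → ℤ) :
    EuclideanSpace ℂ (Fin d) := ∑' k1, Nterm u k k1

/-- Energy `E(u) = Σ_k |u_k|²`. -/
def energy {d : ℕ} (u : (Fin d → ℤ) → EuclideanSpace ℂ (Fin d)) : ℝ := ∑' k, ‖u k‖^2

/-- Enstrophy `V(u) = Σ_k |k|²|u_k|²`. -/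
def enstrophy {d : ℕ} (u : (Fin d → ℤ) → EuclideanSpace ℂ (Fin d)) : ℝ :=
  ∑' k, (znorm k)^2 * ‖u k‖^2

/-- Divergence-free: `(u_k · k) = 0` for all `k`. -/
def divFree {d : ℕ} (u : (Fin d → ℤ) → EuclideanSpace ℂ (Fin d)) : Prop :=
  ∀ k, dotZ (u k) k = 0

/-- Reality condition: `u_{-k} = conj (u_k)`. -/
def realSeq {d : ℕ} (u : (Fin d → ℤ) → EuclideanSpace ℂ (Fin d)) : Prop :=
  ∀ k j, u (-k) j = starRingEnd ℂ (u k j)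

/-- RHS of the Galerkin-projected Navier–Stokes system in the Fourier domain.
(For `u` supported on modes `0 < |k| ≤ n`, the `tsum` below reduces to the finite sum
over `k1 ≠ 0`, `|k1| ≤ n`, `0 < |k-k1| ≤ n`.) -/
def GalerkinRHS {d : ℕ} (ν : ℝ) (fk : EuclideanSpace ℂ (Fin d))
    (u : (Fin d → ℤ) → EuclideanSpace ℂ (Fin d)) (k : Fin d → ℤ) :
    EuclideanSpace ℂ (Fin d) :=
  (∑' k1, Nterm u k k1) - ((ν * (znorm k)^2 : ℝ) : ℂ) • u k + projP k fk

/-- `u : ℝ → (ℤ^d → ℂ^d)` is a solution of the symmetric Galerkin projection of order `n`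
of the Navier–Stokes Fourier system with viscosity `ν` and forcing `f`. -/
def IsGalerkinSol {d : ℕ} (ν n : ℝ) (f : ℝ → (Fin d → ℤ) → EuclideanSpace ℂ (Fin d))
    (u : ℝ → (Fin d → ℤ) → EuclideanSpace ℂ (Fin d)) : Prop :=
  (∀ t, u t 0 = 0) ∧
  (∀ t k, n < znorm k → u t k = 0) ∧
  (∀ t (k : Fin d → ℤ), k ≠ 0 → znorm k ≤ n →
    HasDerivAt (fun s => u s k) (GalerkinRHS ν (f t k) (u t) k) t)

lemma rpow_neg_mul_rpow_neg_le {a b c s : ℝ} (ha : 0 ≤ a) (hb : 0 ≤ b) (hc : 0 < c) (hs : 0 ≤ s)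
    (h : c ≤ a + b) : a ^ (-s) * b ^ (-s) ≤ 2 ^ s * c ^ (-s) * (a ^ (-s) + b ^ (-s)) := by
  wlog hba : b ≤ a generalizing a b
  · rw [mul_comm, add_comm]
    exact this hb ha (by linarith) (le_of_not_ge hba)
  have ha_le : a ^ (-s) ≤ 2 ^ s * c ^ (-s) :=
    calc a ^ (-s) ≤ (c / 2) ^ (-s) :=
          Real.rpow_le_rpow_of_nonpos (by positivity) (by linarith) (by linarith)
      _ = 2 ^ s * c ^ (-s) := by
          rw [Real.div_rpow hc.le zero_le_two, Real.rpow_neg zero_le_two, div_inv_eq_mul,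
            mul_comm]
  calc a ^ (-s) * b ^ (-s) ≤ 2 ^ s * c ^ (-s) * b ^ (-s) :=
        mul_le_mul_of_nonneg_right ha_le (Real.rpow_nonneg hb _)
    _ ≤ 2 ^ s * c ^ (-s) * (a ^ (-s) + b ^ (-s)) :=
        mul_le_mul_of_nonneg_left (le_add_of_nonneg_left (Real.rpow_nonneg ha _)) (by positivity)

namespace NavierStokes

variable {d : ℕ}

def intVec (𝕜 : Type*) [RCLike 𝕜] (k : Fin d → ℤ) : EuclideanSpace 𝕜 (Fin d) :=
  WithLp.toLp 2 fun i => (k i : 𝕜)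

section intVec

variable (𝕜 : Type*) [RCLike 𝕜]

@[simp]
lemma intVec_apply (k : Fin d → ℤ) (i : Fin d) : intVec 𝕜 k i = k i := rfl

lemma intVec_add (a b : Fin d → ℤ) : intVec 𝕜 (a + b) = intVec 𝕜 a + intVec 𝕜 b := by
  ext i; simp

@[simp]
lemma intVec_zero : intVec 𝕜 (0 : Fin d → ℤ) = 0 := by
  ext i; simp

lemma intVec_injective : Function.Injective (intVec (d := d) 𝕜) := by
  intro a b h
  funext i
  simpa using congrArg (· i) h

lemma norm_intVec (k : Fin d → ℤ) : ‖intVec 𝕜 k‖ = znorm k := by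
  rw [EuclideanSpace.norm_eq, znorm]
  congr 1
  refine Finset.sum_congr rfl fun i _ => ?_
  rw [intVec_apply, ← RCLike.ofReal_intCast, RCLike.norm_ofReal, sq_abs]

end intVec

lemma znorm_nonneg (k : Fin d → ℤ) : 0 ≤ znorm k := Real.sqrt_nonneg _

@[simp]
lemma znorm_zero : znorm (0 : Fin d → ℤ) = 0 := by simp [znorm]

lemma znorm_pos {k : Fin d → ℤ} (hk : k ≠ 0) : 0 < znorm k := by
  rw [← norm_intVec ℝ, norm_pos_iff, ← intVec_zero ℝ]
  exact (intVec_injective ℝ).ne hk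

lemma znorm_add_le (a b : Fin d → ℤ) : znorm (a + b) ≤ znorm a + znorm b := by
  simp only [← norm_intVec ℝ, intVec_add]
  exact norm_add_le _ _

lemma dotZ_eq_inner (a : EuclideanSpace ℂ (Fin d)) (k : Fin d → ℤ) :
    dotZ a k = inner ℂ (intVec ℂ k) a := by
  simp [dotZ, PiLp.inner_apply, mul_comm]

lemma norm_dotZ_le (a : EuclideanSpace ℂ (Fin d)) (k : Fin d → ℤ) :
    ‖dotZ a k‖ ≤ znorm k * ‖a‖ := by
  simpa only [dotZ_eq_inner, norm_intVec] using norm_inner_le_norm (intVec ℂ k) a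

lemma projP_eq_starProjection (k : Fin d → ℤ) (v : EuclideanSpace ℂ (Fin d)) :
    projP k v = (ℂ ∙ intVec ℂ k)ᗮ.starProjection v := by
  rw [Submodule.starProjection_orthogonal_val, Submodule.starProjection_singleton, norm_intVec,
    ← dotZ_eq_inner, znorm, Real.sq_sqrt (by positivity)]
  rfl

lemma norm_projP_le (k : Fin d → ℤ) (v : EuclideanSpace ℂ (Fin d)) : ‖projP k v‖ ≤ ‖v‖ := by
  rw [projP_eq_starProjection]
  exact Submodule.norm_starProjection_apply_le _ v

lemma summable_znorm_rpow_neg {r : ℝ} (hr : d < r) :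
    Summable fun k : Fin d → ℤ => znorm k ^ (-r) := by
  let b := (EuclideanSpace.basisFun (Fin d) ℝ).toBasis
  let L := Submodule.span ℤ (Set.range b)
  have hL : Module.finrank ℤ L = d := by rw [ZLattice.rank ℝ L]; simp
  have hsum := ZLattice.summable_norm_rpow L (-r) (by rw [hL]; linarith)
  let e := (b.restrictScalars ℤ).equivFun
  rw [← e.symm.toEquiv.summable_iff] at hsum
  refine hsum.congr fun k => ?_
  have he : (e.symm k : EuclideanSpace ℝ (Fin d)) = intVec ℝ k := by
    ext i
    have hk := congrFun (e.apply_symm_apply k) i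
    rw [Module.Basis.equivFun_apply] at hk
    rw [intVec_apply, ← hk, ← eq_intCast (algebraMap ℤ ℝ), Module.Basis.restrictScalars_repr_apply]
    simp [b]
  simp only [Function.comp_apply, LinearEquiv.coe_toEquiv, Submodule.coe_norm, he, norm_intVec]

lemma znorm_rpow_neg_mul_le {s : ℝ} (hs : 0 ≤ s) {k : Fin d → ℤ} (hk : k ≠ 0) (k1 : Fin d → ℤ) :
    znorm k1 ^ (-s) * znorm (k - k1) ^ (-s) ≤
      2 ^ s * znorm k ^ (-s) * (znorm k1 ^ (-s) + znorm (k - k1) ^ (-s)) :=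
  rpow_neg_mul_rpow_neg_le (znorm_nonneg _) (znorm_nonneg _) (znorm_pos hk) hs
    (by simpa using znorm_add_le k1 (k - k1))

lemma norm_Nterm_le (u : (Fin d → ℤ) → EuclideanSpace ℂ (Fin d)) (k k1 : Fin d → ℤ) :
    ‖Nterm u k k1‖ ≤ znorm k * ‖u k1‖ * ‖u (k - k1)‖ := by
  unfold Nterm
  split_ifs
  · rw [norm_zero]
    have := znorm_nonneg k
    positivity
  · rw [norm_smul, norm_mul, norm_neg, Complex.norm_I, one_mul]
    exact mul_le_mul (norm_dotZ_le _ _) (norm_projP_le _ _) (norm_nonneg _)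
      (mul_nonneg (znorm_nonneg k) (norm_nonneg _))

lemma norm_Nterm_le_of_norm_le {s C : ℝ} (hs : 0 ≤ s) {u : (Fin d → ℤ) → EuclideanSpace ℂ (Fin d)}
    (hu : ∀ m, ‖u m‖ ≤ C * znorm m ^ (-s)) {k : Fin d → ℤ} (hk : k ≠ 0) (k1 : Fin d → ℤ) :
    ‖Nterm u k k1‖ ≤
      2 ^ s * C ^ 2 * znorm k ^ (1 - s) * (znorm k1 ^ (-s) + znorm (k - k1) ^ (-s)) := by
  calc ‖Nterm u k k1‖ ≤ znorm k * ‖u k1‖ * ‖u (k - k1)‖ := norm_Nterm_le u k k1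
    _ ≤ znorm k * (C * znorm k1 ^ (-s)) * (C * znorm (k - k1) ^ (-s)) :=
        mul_le_mul (mul_le_mul_of_nonneg_left (hu k1) (znorm_nonneg k)) (hu (k - k1))
          (norm_nonneg _) (mul_nonneg (znorm_nonneg k) ((norm_nonneg _).trans (hu k1)))
    _ = znorm k * C ^ 2 * (znorm k1 ^ (-s) * znorm (k - k1) ^ (-s)) := by ring
    _ ≤ znorm k * C ^ 2 * (2 ^ s * znorm k ^ (-s) * (znorm k1 ^ (-s) + znorm (k - k1) ^ (-s))) :=
        mul_le_mul_of_nonneg_left (znorm_rpow_neg_mul_le hs hk k1)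
          (mul_nonneg (znorm_nonneg k) (sq_nonneg C))
    _ = 2 ^ s * C ^ 2 * znorm k ^ (1 - s) * (znorm k1 ^ (-s) + znorm (k - k1) ^ (-s)) := by
        rw [show 1 - s = 1 + -s by ring, Real.rpow_add (znorm_pos hk), Real.rpow_one]
        ring

theorem summable_norm_Nterm_and_norm_Nfun_le {s C : ℝ} (hs : d < s)
    {u : (Fin d → ℤ) → EuclideanSpace ℂ (Fin d)} (hu : ∀ m, ‖u m‖ ≤ C * znorm m ^ (-s))
    {k : Fin d → ℤ} (hk : k ≠ 0) :
    Summable (fun k1 => ‖Nterm u k k1‖) ∧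
      ‖Nfun u k‖ ≤
        2 ^ (s + 1) * (∑' m : Fin d → ℤ, znorm m ^ (-s)) * C ^ 2 / znorm k ^ (s - 1) := by
  set w : (Fin d → ℤ) → ℝ := fun m => znorm m ^ (-s)
  have hs0 : 0 ≤ s := (Nat.cast_nonneg d).trans hs.le
  have hw : Summable w := summable_znorm_rpow_neg hs
  have hw_sub : Summable fun k1 => w (k - k1) := (Equiv.subLeft k).summable_iff.mpr hw
  have hw_sub_tsum : ∑' k1, w (k - k1) = ∑' m, w m := (Equiv.subLeft k).tsum_eq w
  have hbound := norm_Nterm_le_of_norm_le hs0 hu hk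
  have hdom := (hw.add hw_sub).mul_left (2 ^ s * C ^ 2 * znorm k ^ (1 - s))
  have hN : Summable fun k1 => ‖Nterm u k k1‖ :=
    hdom.of_nonneg_of_le (fun _ => norm_nonneg _) hbound
  refine ⟨hN, ?_⟩
  calc ‖Nfun u k‖ ≤ ∑' k1, ‖Nterm u k k1‖ := norm_tsum_le_tsum_norm hN
    _ ≤ ∑' k1, 2 ^ s * C ^ 2 * znorm k ^ (1 - s) * (w k1 + w (k - k1)) :=
        hN.tsum_le_tsum hbound hdom
    _ = 2 ^ s * C ^ 2 * znorm k ^ (1 - s) * (2 * ∑' m, w m) := by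
        rw [tsum_mul_left, hw.tsum_add hw_sub, hw_sub_tsum, two_mul]
    _ = 2 ^ (s + 1) * (∑' m, w m) * C ^ 2 / znorm k ^ (s - 1) := by
        rw [Real.rpow_add_one two_ne_zero, show 1 - s = -(s - 1) by ring,
          Real.rpow_neg (znorm_nonneg k), div_eq_mul_inv]
        ring

end NavierStokes

open NavierStokes

/-- 3D convolution estimate: for `s > 3` there is `C₂ = C₂(s) > 0` such that for every
`C > 0` and every divergence-free `u : ℤ³ → ℂ³` with `u_0 = 0` and `|u_k| ≤ C/|k|^s`
for `k ≠ 0`, the series defining `N_k(u)` converges absolutely and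
`|N_k(u)| ≤ C₂ C² / |k|^{s-1}` for every `k ≠ 0`. -/
theorem nonlinearity_convolution_estimate_3d (s : ℝ) (hs : 3 < s) :
    ∃ C₂ : ℝ, 0 < C₂ ∧ ∀ C : ℝ, 0 < C →
      ∀ u : (Fin 3 → ℤ) → EuclideanSpace ℂ (Fin 3),
        divFree u → u 0 = 0 →
        (∀ k : Fin 3 → ℤ, k ≠ 0 → ‖u k‖ ≤ C / znorm k ^ s) →
        ∀ k : Fin 3 → ℤ, k ≠ 0 →
          Summable (fun k1 => ‖Nterm u k k1‖) ∧
          ‖Nfun u k‖ ≤ C₂ * C^2 / znorm k ^ (s - 1) := by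
  have hs3 : ((3 : ℕ) : ℝ) < s := by exact_mod_cast hs
  have hsum_pos : 0 < ∑' m : Fin 3 → ℤ, znorm m ^ (-s) :=
    (summable_znorm_rpow_neg hs3).tsum_pos (fun m => Real.rpow_nonneg (znorm_nonneg m) _) 1
      (Real.rpow_pos_of_pos (znorm_pos one_ne_zero) _)
  refine ⟨2 ^ (s + 1) * ∑' m : Fin 3 → ℤ, znorm m ^ (-s), by positivity,
    fun C _ u _ hu0 hu k hk => summable_norm_Nterm_and_norm_Nfun_le hs3 (fun m => ?_) hk⟩
  rcases eq_or_ne m 0 with rfl | hm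
  · rw [hu0, norm_zero, znorm_zero, Real.zero_rpow (by linarith), mul_zero]
  · rw [Real.rpow_neg (znorm_nonneg m), ← div_eq_mul_inv]
    exact hu m hm
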